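/- arXiv:1707.01392 — 3 statements merged into one kernel-verified Lean document; each statement's English description precedes it below -/
import Mathlib

section
/- In the simplified three-player full-street Kuhn poker game with pot size P ≥ 2, every equilibrium strategy profile satisfies either (a₂ = 0 and b₂ = 0) or (a₂ > 0 and b₂ > 0); that is, Player 2's value bets with A must be balanced by bluffs with Q and vice versa. -/
/-- A strategy profile for simplified three-player full-street Kuhn poker:
eleven betting/calling frequencies. -/
structure Profile where
  a1 : ℝ
  b1 : ℝ
  c1 : ℝ
  d1 : ℝ
  a2 : ℝ
  b2 : ℝ
  c2 : ℝ
  d2 : ℝ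
  b3 : ℝ
  c3 : ℝ
  d3 : ℝ

/-- All eleven frequencies lie in [0,1]. -/
def Profile.valid (s : Profile) : Prop :=
  s.a1 ∈ Set.Icc (0:ℝ) 1 ∧ s.b1 ∈ Set.Icc (0:ℝ) 1 ∧ s.c1 ∈ Set.Icc (0:ℝ) 1 ∧
  s.d1 ∈ Set.Icc (0:ℝ) 1 ∧ s.a2 ∈ Set.Icc (0:ℝ) 1 ∧ s.b2 ∈ Set.Icc (0:ℝ) 1 ∧
  s.c2 ∈ Set.Icc (0:ℝ) 1 ∧ s.d2 ∈ Set.Icc (0:ℝ) 1 ∧ s.b3 ∈ Set.Icc (0:ℝ) 1 ∧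
  s.c3 ∈ Set.Icc (0:ℝ) 1 ∧ s.d3 ∈ Set.Icc (0:ℝ) 1

/-- Player 1's expected profit (so that 24 E₁ equals the stated polynomial). -/
noncomputable def E1 (P : ℝ) (s : Profile) : ℝ :=
  (1 / 24) *
    ((-2 * s.b2 + 2 * s.c2 - 2 * s.b3 + 2 * s.d3 - s.b2 * s.c3) * s.a1
      + (2 * P - 4 - (P + 1) * (s.c2 + s.d3)) * s.b1
      + (s.b2 - 2 + (P + s.a2) * s.b3) * s.c1
      + ((P + 1) * s.b2 - 2 * s.a2) * s.d1
      + (2 - P) * s.b3 + (2 + s.c3 - P) * s.b2)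

/-- Player 2's expected profit (so that 24 E₂ equals the stated polynomial). -/
noncomputable def E2 (P : ℝ) (s : Profile) : ℝ :=
  (1 / 24) *
    ((2 * s.d1 + 2 * s.c3 - 2 * s.b3 - s.c1 * s.b3 - s.b1 * s.c3) * s.a2
      + (2 * P - 4 + 2 * s.a1 - (P + 1) * (s.c3 + s.d1)) * s.b2
      + (P * s.b1 - 2 * s.a1) * s.c2
      + ((P + 1) * s.b3 - 2 + s.b1) * s.d2
      + (2 - P + s.c1) * s.b3 + (2 - P) * s.b1)

/-- Player 3's expected profit (so that 24 E₃ equals the stated polynomial). -/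
noncomputable def E3 (P : ℝ) (s : Profile) : ℝ :=
  (1 / 24) *
    ((2 * P - 4 + 2 * s.a1 + 2 * s.a2 - (P + 1) * (s.c1 + s.d2)) * s.b3
      + ((P + s.a1) * s.b2 - (2 - s.b1) * s.a2) * s.c3
      + ((P + 1) * s.b1 - 2 * s.a1) * s.d3
      + (2 - P - s.c1) * s.b2 + 2 * s.c1
      + (2 - P + s.c2 - s.d2) * s.b1 + 2 * s.d2)

/-- A profile is an equilibrium if no player can increase her own expected
profit by unilaterally changing her own frequencies within [0,1]. -/
def IsEquilibrium (P : ℝ) (s : Profile) : Prop :=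
  (∀ a b c d : ℝ, a ∈ Set.Icc (0:ℝ) 1 → b ∈ Set.Icc (0:ℝ) 1 →
      c ∈ Set.Icc (0:ℝ) 1 → d ∈ Set.Icc (0:ℝ) 1 →
      E1 P { s with a1 := a, b1 := b, c1 := c, d1 := d } ≤ E1 P s) ∧
  (∀ a b c d : ℝ, a ∈ Set.Icc (0:ℝ) 1 → b ∈ Set.Icc (0:ℝ) 1 →
      c ∈ Set.Icc (0:ℝ) 1 → d ∈ Set.Icc (0:ℝ) 1 →
      E2 P { s with a2 := a, b2 := b, c2 := c, d2 := d } ≤ E2 P s) ∧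
  (∀ b c d : ℝ, b ∈ Set.Icc (0:ℝ) 1 → c ∈ Set.Icc (0:ℝ) 1 →
      d ∈ Set.Icc (0:ℝ) 1 →
      E3 P { s with b3 := b, c3 := c, d3 := d } ≤ E3 P s)

/-!
Each expected profit is affine in each of the deviating player's own frequencies, so at an
equilibrium a frequency is `0` when its coefficient is negative and `1` when it is positive.

If Player 2 value-bets (`a₂ > 0`) but never bluffs (`b₂ = 0`), Players 1 and 3 never call with
the hands that only beat a bluff (`d₁ = c₃ = 0`); value betting then forces `b₃ = 0`, after which
`c₁ = d₂ = 0`, and with those Player 3's coefficient of `b₃` is `2P - 4 + 2a₁ + 2a₂ > 0`, so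
`b₃ = 1`. If Player 2 bluffs (`b₂ > 0`) without value betting (`a₂ = 0`), both opponents always
call (`d₁ = c₃ = 1`), and then the coefficient of `b₂` is `2a₁ - 6 < 0`, so `b₂ = 0`.
-/

open Set

section LinearMaximizer

variable {k x : ℝ}

theorem eq_zero_of_isMaxOn_mul_of_neg (hx : 0 ≤ x)
    (hmax : IsMaxOn (fun y => k * y) (Icc 0 1) x) (hk : k < 0) : x = 0 := by
  have h : k * 0 ≤ k * x := hmax (left_mem_Icc.2 zero_le_one)
  nlinarith

theorem eq_one_of_isMaxOn_mul_of_pos (hx : x ≤ 1)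
    (hmax : IsMaxOn (fun y => k * y) (Icc 0 1) x) (hk : 0 < k) : x = 1 := by
  have h : k * 1 ≤ k * x := hmax (right_mem_Icc.2 zero_le_one)
  nlinarith

theorem nonneg_of_isMaxOn_mul_of_pos (hmax : IsMaxOn (fun y => k * y) (Icc 0 1) x)
    (hx : 0 < x) : 0 ≤ k := by
  have h : k * 0 ≤ k * x := hmax (left_mem_Icc.2 zero_le_one)
  nlinarith

end LinearMaximizer

namespace IsEquilibrium

variable {P : ℝ} {s : Profile}

theorem isMaxOn_c1 (heq : IsEquilibrium P s) (hval : s.valid) :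
    IsMaxOn (fun y => (s.b2 - 2 + (P + s.a2) * s.b3) * y) (Icc 0 1) s.c1 := by
  obtain ⟨ha1, hb1, -, hd1, -⟩ := hval
  refine isMaxOn_iff.2 fun y hy => ?_
  have h := heq.1 _ _ _ _ ha1 hb1 hy hd1
  simp only [E1] at h
  linear_combination 24 * h

theorem isMaxOn_d1 (heq : IsEquilibrium P s) (hval : s.valid) :
    IsMaxOn (fun y => ((P + 1) * s.b2 - 2 * s.a2) * y) (Icc 0 1) s.d1 := by
  obtain ⟨ha1, hb1, hc1, -⟩ := hval
  refine isMaxOn_iff.2 fun y hy => ?_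
  have h := heq.1 _ _ _ _ ha1 hb1 hc1 hy
  simp only [E1] at h
  linear_combination 24 * h

theorem isMaxOn_a2 (heq : IsEquilibrium P s) (hval : s.valid) :
    IsMaxOn (fun y => (2 * s.d1 + 2 * s.c3 - 2 * s.b3 - s.c1 * s.b3 - s.b1 * s.c3) * y)
      (Icc 0 1) s.a2 := by
  obtain ⟨-, -, -, -, -, hb2, hc2, hd2, -⟩ := hval
  refine isMaxOn_iff.2 fun y hy => ?_
  have h := heq.2.1 _ _ _ _ hy hb2 hc2 hd2
  simp only [E2] at h
  linear_combination 24 * h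

theorem isMaxOn_b2 (heq : IsEquilibrium P s) (hval : s.valid) :
    IsMaxOn (fun y => (2 * P - 4 + 2 * s.a1 - (P + 1) * (s.c3 + s.d1)) * y)
      (Icc 0 1) s.b2 := by
  obtain ⟨-, -, -, -, ha2, -, hc2, hd2, -⟩ := hval
  refine isMaxOn_iff.2 fun y hy => ?_
  have h := heq.2.1 _ _ _ _ ha2 hy hc2 hd2
  simp only [E2] at h
  linear_combination 24 * h

theorem isMaxOn_d2 (heq : IsEquilibrium P s) (hval : s.valid) :
    IsMaxOn (fun y => ((P + 1) * s.b3 - 2 + s.b1) * y) (Icc 0 1) s.d2 := by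
  obtain ⟨-, -, -, -, ha2, hb2, hc2, -⟩ := hval
  refine isMaxOn_iff.2 fun y hy => ?_
  have h := heq.2.1 _ _ _ _ ha2 hb2 hc2 hy
  simp only [E2] at h
  linear_combination 24 * h

theorem isMaxOn_b3 (heq : IsEquilibrium P s) (hval : s.valid) :
    IsMaxOn (fun y => (2 * P - 4 + 2 * s.a1 + 2 * s.a2 - (P + 1) * (s.c1 + s.d2)) * y)
      (Icc 0 1) s.b3 := by
  obtain ⟨-, -, -, -, -, -, -, -, -, hc3, hd3⟩ := hval
  refine isMaxOn_iff.2 fun y hy => ?_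
  have h := heq.2.2 _ _ _ hy hc3 hd3
  simp only [E3] at h
  linear_combination 24 * h

theorem isMaxOn_c3 (heq : IsEquilibrium P s) (hval : s.valid) :
    IsMaxOn (fun y => ((P + s.a1) * s.b2 - (2 - s.b1) * s.a2) * y) (Icc 0 1) s.c3 := by
  obtain ⟨-, -, -, -, -, -, -, -, hb3, -, hd3⟩ := hval
  refine isMaxOn_iff.2 fun y hy => ?_
  have h := heq.2.2 _ _ _ hb3 hy hd3
  simp only [E3] at h
  linear_combination 24 * h

theorem a2_eq_zero_of_b2_eq_zero (heq : IsEquilibrium P s) (hval : s.valid) (hP : 2 ≤ P)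
    (hb2 : s.b2 = 0) : s.a2 = 0 := by
  have hc1_max := heq.isMaxOn_c1 hval
  have hd1_max := heq.isMaxOn_d1 hval
  have ha2_max := heq.isMaxOn_a2 hval
  have hd2_max := heq.isMaxOn_d2 hval
  have hb3_max := heq.isMaxOn_b3 hval
  have hc3_max := heq.isMaxOn_c3 hval
  obtain ⟨ha1, hb1, hc1, hd1, ha2, -, -, hd2, hb3, hc3, -⟩ := hval
  by_contra ha2_ne
  have ha2_pos : 0 < s.a2 := ha2.1.lt_of_ne' ha2_ne
  have hd1_zero : s.d1 = 0 :=
    eq_zero_of_isMaxOn_mul_of_neg hd1.1 hd1_max (by rw [hb2]; linarith)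
  have hc3_zero : s.c3 = 0 :=
    eq_zero_of_isMaxOn_mul_of_neg hc3.1 hc3_max (by rw [hb2]; nlinarith [hb1.2])
  have hb3_zero : s.b3 = 0 := by
    have h := nonneg_of_isMaxOn_mul_of_pos ha2_max ha2_pos
    rw [hd1_zero, hc3_zero] at h
    nlinarith [hb3.1, hc1.1]
  have hc1_zero : s.c1 = 0 :=
    eq_zero_of_isMaxOn_mul_of_neg hc1.1 hc1_max (by rw [hb2, hb3_zero]; norm_num)
  have hd2_zero : s.d2 = 0 :=
    eq_zero_of_isMaxOn_mul_of_neg hd2.1 hd2_max (by rw [hb3_zero]; linarith [hb1.2])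
  have hb3_one : s.b3 = 1 :=
    eq_one_of_isMaxOn_mul_of_pos hb3.2 hb3_max (by rw [hc1_zero, hd2_zero]; linarith [ha1.1])
  exact zero_ne_one (hb3_zero.symm.trans hb3_one)

theorem b2_eq_zero_of_a2_eq_zero (heq : IsEquilibrium P s) (hval : s.valid) (hP : 2 ≤ P)
    (ha2 : s.a2 = 0) : s.b2 = 0 := by
  have hd1_max := heq.isMaxOn_d1 hval
  have hb2_max := heq.isMaxOn_b2 hval
  have hc3_max := heq.isMaxOn_c3 hval
  obtain ⟨ha1, -, -, hd1, -, hb2, -, -, -, hc3, -⟩ := hval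
  by_contra hb2_ne
  have hb2_pos : 0 < s.b2 := hb2.1.lt_of_ne' hb2_ne
  have hd1_one : s.d1 = 1 :=
    eq_one_of_isMaxOn_mul_of_pos hd1.2 hd1_max (by rw [ha2]; nlinarith)
  have hc3_one : s.c3 = 1 :=
    eq_one_of_isMaxOn_mul_of_pos hc3.2 hc3_max (by rw [ha2]; nlinarith [ha1.1])
  exact hb2_ne <| eq_zero_of_isMaxOn_mul_of_neg hb2.1 hb2_max
    (by rw [hd1_one, hc3_one]; linarith [ha1.2])

end IsEquilibrium

theorem equilibrium_player2_balanced (P : ℝ) (s : Profile)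
    (hP : 2 ≤ P) (hval : s.valid) (heq : IsEquilibrium P s) :
    (s.a2 = 0 ∧ s.b2 = 0) ∨ (0 < s.a2 ∧ 0 < s.b2) := by
  have ha2 : 0 ≤ s.a2 := hval.2.2.2.2.1.1
  have hb2 : 0 ≤ s.b2 := hval.2.2.2.2.2.1.1
  rcases ha2.eq_or_lt with ha2 | ha2
  · exact Or.inl ⟨ha2.symm, heq.b2_eq_zero_of_a2_eq_zero hval hP ha2.symm⟩
  · refine Or.inr ⟨ha2, hb2.lt_of_ne fun hb2 => ?_⟩
    exact ha2.ne' (heq.a2_eq_zero_of_b2_eq_zero hval hP hb2.symm)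
end

section
/- (Solution 1) In the simplified three-player full-street Kuhn poker game with pot size 2 ≤ P ≤ 3, every strategy profile with a₁ = b₁ = a₂ = b₂ = 0, b₃ = 2/(P+1), c₁ = 0, d₂ = (2P−4)/(P+1), (2P−4)/(P+1) ≤ c₃ + d₁ ≤ 2/(P+1) and (2P−4)/(P+1) ≤ c₂ + d₃ ≤ 2/(P+1) is an equilibrium. -/
/-!
Each player's expected profit is affine in her own frequencies, so a unilateral deviation changes
it by `∑ kᵢ (yᵢ - xᵢ)`, with slopes `kᵢ` depending only on the other players' frequencies. In
Solution 1 every own frequency is either `0` with a nonpositive slope or has slope `0`: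
`b₃ = 2/(P+1)` makes player 2 indifferent in `d₂`, `d₂ = (2P-4)/(P+1)` makes player 3 indifferent
in `b₃`, the bounds on `c₂ + d₃` and `c₃ + d₁` make the slopes of `a` and `b` nonpositive for
players 1 and 2, and `P b₃ ≤ 2` does so for `c₁`; all other slopes vanish once
`a₁ = b₁ = a₂ = b₂ = 0`.
-/

section Deviation

variable (P : ℝ) (s : Profile)

theorem E1_update_sub (a b c d : ℝ) :
    E1 P { s with a1 := a, b1 := b, c1 := c, d1 := d } - E1 P s =
      (1 / 24) *
        ((-2 * s.b2 + 2 * s.c2 - 2 * s.b3 + 2 * s.d3 - s.b2 * s.c3) * (a - s.a1)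
          + (2 * P - 4 - (P + 1) * (s.c2 + s.d3)) * (b - s.b1)
          + (s.b2 - 2 + (P + s.a2) * s.b3) * (c - s.c1)
          + ((P + 1) * s.b2 - 2 * s.a2) * (d - s.d1)) := by
  simp only [E1]; ring

theorem E2_update_sub (a b c d : ℝ) :
    E2 P { s with a2 := a, b2 := b, c2 := c, d2 := d } - E2 P s =
      (1 / 24) *
        ((2 * s.d1 + 2 * s.c3 - 2 * s.b3 - s.c1 * s.b3 - s.b1 * s.c3) * (a - s.a2)
          + (2 * P - 4 + 2 * s.a1 - (P + 1) * (s.c3 + s.d1)) * (b - s.b2)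
          + (P * s.b1 - 2 * s.a1) * (c - s.c2)
          + ((P + 1) * s.b3 - 2 + s.b1) * (d - s.d2)) := by
  simp only [E2]; ring

theorem E3_update_sub (b c d : ℝ) :
    E3 P { s with b3 := b, c3 := c, d3 := d } - E3 P s =
      (1 / 24) *
        ((2 * P - 4 + 2 * s.a1 + 2 * s.a2 - (P + 1) * (s.c1 + s.d2)) * (b - s.b3)
          + ((P + s.a1) * s.b2 - (2 - s.b1) * s.a2) * (c - s.c3)
          + ((P + 1) * s.b1 - 2 * s.a1) * (d - s.d3)) := by
  simp only [E3]; ring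

end Deviation

section BestReply

variable {P : ℝ} {s : Profile}

theorem E1_update_le (ha1 : s.a1 = 0) (hb1 : s.b1 = 0) (hc1 : s.c1 = 0) (ha2 : s.a2 = 0)
    (hb2 : s.b2 = 0) (h_slope_a : s.c2 + s.d3 ≤ s.b3)
    (h_slope_b : 2 * P - 4 ≤ (P + 1) * (s.c2 + s.d3)) (h_slope_c : P * s.b3 ≤ 2)
    {a b c d : ℝ} (ha : 0 ≤ a) (hb : 0 ≤ b) (hc : 0 ≤ c) :
    E1 P { s with a1 := a, b1 := b, c1 := c, d1 := d } ≤ E1 P s := by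
  rw [← sub_nonpos, E1_update_sub]
  simp only [ha1, hb1, hc1, ha2, hb2, sub_zero]
  have h_a := mul_nonpos_of_nonneg_of_nonpos ha (sub_nonpos.2 h_slope_a)
  have h_b := mul_nonpos_of_nonneg_of_nonpos hb (sub_nonpos.2 h_slope_b)
  have h_c := mul_nonpos_of_nonneg_of_nonpos hc (sub_nonpos.2 h_slope_c)
  linear_combination (1 / 12) * h_a + (1 / 24) * h_b + (1 / 24) * h_c

theorem E2_update_le (ha1 : s.a1 = 0) (hb1 : s.b1 = 0) (hc1 : s.c1 = 0) (ha2 : s.a2 = 0)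
    (hb2 : s.b2 = 0) (h_slope_a : s.c3 + s.d1 ≤ s.b3)
    (h_slope_b : 2 * P - 4 ≤ (P + 1) * (s.c3 + s.d1)) (h_slope_d : (P + 1) * s.b3 = 2)
    {a b c d : ℝ} (ha : 0 ≤ a) (hb : 0 ≤ b) :
    E2 P { s with a2 := a, b2 := b, c2 := c, d2 := d } ≤ E2 P s := by
  rw [← sub_nonpos, E2_update_sub]
  simp only [ha1, hb1, hc1, ha2, hb2, h_slope_d, sub_zero]
  have h_a := mul_nonpos_of_nonneg_of_nonpos ha (sub_nonpos.2 h_slope_a)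
  have h_b := mul_nonpos_of_nonneg_of_nonpos hb (sub_nonpos.2 h_slope_b)
  linear_combination (1 / 12) * h_a + (1 / 24) * h_b

theorem E3_update_le (ha1 : s.a1 = 0) (hb1 : s.b1 = 0) (hc1 : s.c1 = 0) (ha2 : s.a2 = 0)
    (hb2 : s.b2 = 0) (h_slope_b : (P + 1) * s.d2 = 2 * P - 4) (b c d : ℝ) :
    E3 P { s with b3 := b, c3 := c, d3 := d } ≤ E3 P s := by
  rw [← sub_nonpos, E3_update_sub]
  simp only [ha1, hb1, hc1, ha2, hb2]
  linear_combination (-(1 / 24) * (b - s.b3)) * h_slope_b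

end BestReply

theorem solution_1_is_equilibrium_general (P : ℝ) (s : Profile)
    (hP2 : 2 ≤ P)
    (ha1 : s.a1 = 0) (hb1 : s.b1 = 0) (ha2 : s.a2 = 0) (hb2 : s.b2 = 0)
    (hb3 : s.b3 = 2 / (P + 1)) (hc1 : s.c1 = 0) (hd2 : s.d2 = (2 * P - 4) / (P + 1))
    (h31l : (2 * P - 4) / (P + 1) ≤ s.c3 + s.d1) (h31u : s.c3 + s.d1 ≤ 2 / (P + 1))
    (h23l : (2 * P - 4) / (P + 1) ≤ s.c2 + s.d3) (h23u : s.c2 + s.d3 ≤ 2 / (P + 1)) :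
    IsEquilibrium P s := by
  have hP : 0 < P + 1 := by linarith
  have hb3' : (P + 1) * s.b3 = 2 := by rw [hb3]; field_simp
  have hd2' : (P + 1) * s.d2 = 2 * P - 4 := by rw [hd2]; field_simp
  have hPb3 : P * s.b3 ≤ 2 := by
    have : 0 ≤ s.b3 := hb3 ▸ by positivity
    linarith
  refine ⟨fun a b c d ha hb hc _ => ?_, fun a b c d ha hb _ _ => ?_,
    fun b c d _ _ _ => E3_update_le ha1 hb1 hc1 ha2 hb2 hd2' b c d⟩
  · exact E1_update_le ha1 hb1 hc1 ha2 hb2 (hb3 ▸ h23u) ((div_le_iff₀' hP).1 h23l) hPb3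
      ha.1 hb.1 hc.1
  · exact E2_update_le ha1 hb1 hc1 ha2 hb2 (hb3 ▸ h31u) ((div_le_iff₀' hP).1 h31l) hb3' ha.1 hb.1

theorem solution_1_is_equilibrium (P : ℝ) (s : Profile)
    (hP2 : 2 ≤ P) (hP3 : P ≤ 3) (hval : s.valid)
    (ha1 : s.a1 = 0) (hb1 : s.b1 = 0) (ha2 : s.a2 = 0) (hb2 : s.b2 = 0)
    (hb3 : s.b3 = 2 / (P + 1)) (hc1 : s.c1 = 0) (hd2 : s.d2 = (2 * P - 4) / (P + 1))
    (h31l : (2 * P - 4) / (P + 1) ≤ s.c3 + s.d1) (h31u : s.c3 + s.d1 ≤ 2 / (P + 1))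
    (h23l : (2 * P - 4) / (P + 1) ≤ s.c2 + s.d3) (h23u : s.c2 + s.d3 ≤ 2 / (P + 1)) :
    IsEquilibrium P s :=
  solution_1_is_equilibrium_general P s hP2 ha1 hb1 ha2 hb2 hb3 hc1 hd2 h31l h31u h23l h23u
end

section
/- (Solution 10) In the simplified three-player full-street Kuhn poker game with pot size P ≥ 5, the strategy profile with a₁ = 1, b₁ = 2/P, a₂ = 1, b₂ = 2/(P+1), b₃ = 2P/(P+1)², c₁ = (P−1)/(P+1), d₂ = 1, c₃ = 1, d₁ = (P−3)/(P+1), c₂ = (P−5)/(P+1) and d₃ = 1 is an equilibrium. -/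
/-! Each player's profit is affine in her own frequencies. At Solution 10 the coefficient of every
frequency strictly between 0 and 1 vanishes (the player is indifferent), and the remaining
coefficients belong to frequencies equal to 1 and are nonnegative, so no deviation within [0,1]
pays. -/

theorem E1_update (P : ℝ) (s : Profile) (a b c d : ℝ) :
    E1 P { s with a1 := a, b1 := b, c1 := c, d1 := d } = E1 P s + (1 / 24) *
      ((-2 * s.b2 + 2 * s.c2 - 2 * s.b3 + 2 * s.d3 - s.b2 * s.c3) * (a - s.a1)
        + (2 * P - 4 - (P + 1) * (s.c2 + s.d3)) * (b - s.b1)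
        + (s.b2 - 2 + (P + s.a2) * s.b3) * (c - s.c1)
        + ((P + 1) * s.b2 - 2 * s.a2) * (d - s.d1)) := by
  simp only [E1]
  ring

theorem E2_update (P : ℝ) (s : Profile) (a b c d : ℝ) :
    E2 P { s with a2 := a, b2 := b, c2 := c, d2 := d } = E2 P s + (1 / 24) *
      ((2 * s.d1 + 2 * s.c3 - 2 * s.b3 - s.c1 * s.b3 - s.b1 * s.c3) * (a - s.a2)
        + (2 * P - 4 + 2 * s.a1 - (P + 1) * (s.c3 + s.d1)) * (b - s.b2)
        + (P * s.b1 - 2 * s.a1) * (c - s.c2)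
        + ((P + 1) * s.b3 - 2 + s.b1) * (d - s.d2)) := by
  simp only [E2]
  ring

theorem E3_update (P : ℝ) (s : Profile) (b c d : ℝ) :
    E3 P { s with b3 := b, c3 := c, d3 := d } = E3 P s + (1 / 24) *
      ((2 * P - 4 + 2 * s.a1 + 2 * s.a2 - (P + 1) * (s.c1 + s.d2)) * (b - s.b3)
        + ((P + s.a1) * s.b2 - (2 - s.b1) * s.a2) * (c - s.c3)
        + ((P + 1) * s.b1 - 2 * s.a1) * (d - s.d3)) := by
  simp only [E3]
  ring

section Solution10

variable {P : ℝ} {s : Profile}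

theorem E1_update_le_self (hP : 5 ≤ P) (ha1 : s.a1 = 1) (ha2 : s.a2 = 1) (hb2 : s.b2 = 2 / (P + 1))
    (hb3 : s.b3 = 2 * P / (P + 1) ^ 2) (hc3 : s.c3 = 1) (hc2 : s.c2 = (P - 5) / (P + 1))
    (hd3 : s.d3 = 1) {a : ℝ} (ha : a ≤ 1) (b c d : ℝ) :
    E1 P { s with a1 := a, b1 := b, c1 := c, d1 := d } ≤ E1 P s := by
  have hP1 : P + 1 ≠ 0 := by positivity
  have hA : -2 * s.b2 + 2 * s.c2 - 2 * s.b3 + 2 * s.d3 - s.b2 * s.c3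
      = (4 * P ^ 2 - 14 * P - 14) / (P + 1) ^ 2 := by
    rw [hb2, hc2, hb3, hd3, hc3]
    field_simp
    ring
  have hB : 2 * P - 4 - (P + 1) * (s.c2 + s.d3) = 0 := by
    rw [hc2, hd3]
    field_simp
    ring
  have hC : s.b2 - 2 + (P + s.a2) * s.b3 = 0 := by
    rw [hb2, ha2, hb3]
    field_simp
    ring
  have hD : (P + 1) * s.b2 - 2 * s.a2 = 0 := by
    rw [hb2, ha2]
    field_simp
    ring
  have hA_nonneg : 0 ≤ (4 * P ^ 2 - 14 * P - 14) / (P + 1) ^ 2 :=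
    div_nonneg (by nlinarith) (by positivity)
  rw [E1_update, hA, hB, hC, hD, ha1]
  linarith [mul_nonpos_of_nonneg_of_nonpos hA_nonneg (sub_nonpos.2 ha)]

theorem E2_update_le_self (hP : 5 ≤ P) (ha1 : s.a1 = 1) (hb1 : s.b1 = 2 / P) (ha2 : s.a2 = 1)
    (hb3 : s.b3 = 2 * P / (P + 1) ^ 2) (hc1 : s.c1 = (P - 1) / (P + 1)) (hd2 : s.d2 = 1)
    (hc3 : s.c3 = 1) (hd1 : s.d1 = (P - 3) / (P + 1)) {a d : ℝ} (ha : a ≤ 1) (hd : d ≤ 1)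
    (b c : ℝ) :
    E2 P { s with a2 := a, b2 := b, c2 := c, d2 := d } ≤ E2 P s := by
  have hP0 : P ≠ 0 := by positivity
  have hP1 : P + 1 ≠ 0 := by positivity
  have hA : 2 * s.d1 + 2 * s.c3 - 2 * s.b3 - s.c1 * s.b3 - s.b1 * s.c3
      = (4 * P ^ 4 - 4 * P ^ 3 - 12 * P ^ 2 - 10 * P - 2) / (P * (P + 1) ^ 3) := by
    rw [hd1, hc3, hb3, hc1, hb1]
    field_simp
    ring
  have hB : 2 * P - 4 + 2 * s.a1 - (P + 1) * (s.c3 + s.d1) = 0 := by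
    rw [ha1, hc3, hd1]
    field_simp
    ring
  have hC : P * s.b1 - 2 * s.a1 = 0 := by
    rw [hb1, ha1]
    field_simp
    ring
  have hD : (P + 1) * s.b3 - 2 + s.b1 = 2 / (P * (P + 1)) := by
    rw [hb3, hb1]
    field_simp
    ring
  have hA_nonneg : 0 ≤ (4 * P ^ 4 - 4 * P ^ 3 - 12 * P ^ 2 - 10 * P - 2) / (P * (P + 1) ^ 3) := by
    refine div_nonneg ?_ (by positivity)
    have hP2 : 25 ≤ P ^ 2 := by nlinarith
    nlinarith [mul_le_mul_of_nonneg_left hP (by positivity : (0 : ℝ) ≤ P ^ 3)]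
  have hD_nonneg : 0 ≤ 2 / (P * (P + 1)) := by positivity
  rw [E2_update, hA, hB, hC, hD, ha2, hd2]
  linarith [mul_nonpos_of_nonneg_of_nonpos hA_nonneg (sub_nonpos.2 ha),
    mul_nonpos_of_nonneg_of_nonpos hD_nonneg (sub_nonpos.2 hd)]

theorem E3_update_le_self (hP : 0 < P) (ha1 : s.a1 = 1) (hb1 : s.b1 = 2 / P) (ha2 : s.a2 = 1)
    (hb2 : s.b2 = 2 / (P + 1)) (hc1 : s.c1 = (P - 1) / (P + 1)) (hd2 : s.d2 = 1)
    (hc3 : s.c3 = 1) (hd3 : s.d3 = 1) (b : ℝ) {c d : ℝ} (hc : c ≤ 1) (hd : d ≤ 1) :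
    E3 P { s with b3 := b, c3 := c, d3 := d } ≤ E3 P s := by
  have hP0 : P ≠ 0 := by positivity
  have hP1 : P + 1 ≠ 0 := by positivity
  have hB : 2 * P - 4 + 2 * s.a1 + 2 * s.a2 - (P + 1) * (s.c1 + s.d2) = 0 := by
    rw [ha1, ha2, hc1, hd2]
    field_simp
    ring
  have hC : (P + s.a1) * s.b2 - (2 - s.b1) * s.a2 = 2 / P := by
    rw [ha1, hb2, hb1, ha2]
    field_simp
    ring
  have hD : (P + 1) * s.b1 - 2 * s.a1 = 2 / P := by
    rw [hb1, ha1]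
    field_simp
    ring
  have hP_inv : 0 ≤ 2 / P := by positivity
  rw [E3_update, hB, hC, hD, hc3, hd3]
  linarith [mul_nonpos_of_nonneg_of_nonpos hP_inv (sub_nonpos.2 hc),
    mul_nonpos_of_nonneg_of_nonpos hP_inv (sub_nonpos.2 hd)]

end Solution10

theorem solution_10_is_equilibrium_general (P : ℝ) (s : Profile)
    (hP : 5 ≤ P)
    (ha1 : s.a1 = 1) (hb1 : s.b1 = 2 / P)
    (ha2 : s.a2 = 1) (hb2 : s.b2 = 2 / (P + 1))
    (hb3 : s.b3 = 2 * P / (P + 1) ^ 2)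
    (hc1 : s.c1 = (P - 1) / (P + 1)) (hd2 : s.d2 = 1) (hc3 : s.c3 = 1)
    (hd1 : s.d1 = (P - 3) / (P + 1))
    (hc2 : s.c2 = (P - 5) / (P + 1)) (hd3 : s.d3 = 1) :
    IsEquilibrium P s := by
  refine ⟨fun a b c d ha _ _ _ => ?_, fun a b c d ha _ _ hd => ?_, fun b c d _ hc hd => ?_⟩
  · exact E1_update_le_self hP ha1 ha2 hb2 hb3 hc3 hc2 hd3 ha.2 b c d
  · exact E2_update_le_self hP ha1 hb1 ha2 hb3 hc1 hd2 hc3 hd1 ha.2 hd.2 b c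
  · exact E3_update_le_self (by linarith) ha1 hb1 ha2 hb2 hc1 hd2 hc3 hd3 b hc.2 hd.2

theorem solution_10_is_equilibrium (P : ℝ) (s : Profile)
    (hP : 5 ≤ P) (hval : s.valid)
    (ha1 : s.a1 = 1) (hb1 : s.b1 = 2 / P)
    (ha2 : s.a2 = 1) (hb2 : s.b2 = 2 / (P + 1))
    (hb3 : s.b3 = 2 * P / (P + 1) ^ 2)
    (hc1 : s.c1 = (P - 1) / (P + 1)) (hd2 : s.d2 = 1) (hc3 : s.c3 = 1)
    (hd1 : s.d1 = (P - 3) / (P + 1))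
    (hc2 : s.c2 = (P - 5) / (P + 1)) (hd3 : s.d3 = 1) :
    IsEquilibrium P s :=
  solution_10_is_equilibrium_general P s hP ha1 hb1 ha2 hb2 hb3 hc1 hd2 hc3 hd1 hc2 hd3
end
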